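/- For every integer k ≥ 3, every integer n ≥ 1, and every integer r ≥ 1, setting A = (1 + 1/(e·k)) · (k+1)^(−1/(k·n)), there exists a sequence X : Fin N → (Fin r → ZMod n) with N = ⌊(k·n/4)·A^r⌋ containing no zero-sum subsequence of length k·n; that is, s_{kn}(C_n^r) > (kn/4)·((1 + 1/(ek))·(k+1)^(−1/(kn)))^r. -/

import Mathlib

/-!
Choose the `r` coordinates of the `N` terms independently, each equal to `1` with probability
`p = 1 / (e k + 1)` and `0` otherwise. A fixed set of `m = k n` terms sums to zero exactly when,
in every coordinate, the number of ones among them, a `Bin(m, p)` variable, is divisible by `n`.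
Since `e k p = 1 - p` and `C(m, t) ≤ (e k)^t` for `n ∣ t`, this has probability at most
`(k + 1) (1 - p)^m`. With `C(N, m) ≤ (e N / m)^m`, the expected number of zero-sum `m`-subsets is
at most `(e / 4)^m < 1`, so some sequence has none.
-/

open Finset

lemma one_le_sum_sum_filter_of_forall_exists_mem {Ω κ : Type*} [Fintype Ω] {μ : Ω → ℝ}
    (hμ : ∀ ω, 0 ≤ μ ω) (hμ1 : ∑ ω, μ ω = 1) {I : Finset κ} {E : κ → Ω → Prop}
    [∀ i, DecidablePred (E i)] (hE : ∀ ω, ∃ i ∈ I, E i ω) :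
    1 ≤ ∑ i ∈ I, ∑ ω with E i ω, μ ω := by
  calc (1 : ℝ) = ∑ ω, μ ω := hμ1.symm
    _ ≤ ∑ ω, ∑ i ∈ I, if E i ω then μ ω else 0 := by
      refine sum_le_sum fun ω _ => ?_
      obtain ⟨i, hi, hEi⟩ := hE ω
      calc μ ω = if E i ω then μ ω else 0 := (if_pos hEi).symm
        _ ≤ _ := single_le_sum (f := fun i => if E i ω then μ ω else 0)
          (fun j _ => by split_ifs <;> simp [hμ]) hi
    _ = ∑ i ∈ I, ∑ ω with E i ω, μ ω := by
      rw [sum_comm]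
      simp only [sum_filter]

lemma sum_powerset_union_inter_mul_pow_mul_pow {α R : Type*} [DecidableEq α] [CommSemiring R]
    {p q : R} (hpq : p + q = 1) (f : Finset α → R) {s d : Finset α} (hsd : Disjoint s d) :
    ∑ T ∈ (s ∪ d).powerset, f (s ∩ T) * (p ^ #T * q ^ #((s ∪ d) \ T)) =
      ∑ A ∈ s.powerset, f A * (p ^ #A * q ^ #(s \ A)) := by
  induction d using Finset.induction_on with
  | empty =>
    rw [union_empty]
    exact sum_congr rfl fun A hA => by rw [inter_eq_right.2 (mem_powerset.1 hA)]
  | insert a d had ih =>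
    have has : a ∉ s := disjoint_right.1 hsd (mem_insert_self a d)
    have hasd : a ∉ s ∪ d := by simp [has, had]
    rw [union_insert, sum_powerset_insert hasd,
      ← ih (disjoint_of_subset_right (subset_insert a d) hsd), ← sum_add_distrib]
    refine sum_congr rfl fun T hT => ?_
    have haT : a ∉ T := fun h => hasd (mem_powerset.1 hT h)
    rw [inter_insert_of_notMem has, insert_sdiff_insert, sdiff_insert_of_notMem hasd,
      insert_sdiff_of_notMem _ haT, card_insert_of_notMem haT,
      card_insert_of_notMem fun h => hasd (mem_sdiff.1 h).1]
    calc _ = f (s ∩ T) * (p ^ #T * q ^ #((s ∪ d) \ T)) * (p + q) := by ring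
      _ = _ := by rw [hpq, mul_one]

/-- `P(n ∣ Bin(m, p))`. -/
noncomputable def probBinomialDvd (n m : ℕ) (p : ℝ) : ℝ :=
  ∑ t ∈ range (m + 1), if n ∣ t then (m.choose t : ℝ) * p ^ t * (1 - p) ^ (m - t) else 0

lemma probBinomialDvd_nonneg (n m : ℕ) {p : ℝ} (hp0 : 0 ≤ p) (hp1 : p ≤ 1) :
    0 ≤ probBinomialDvd n m p :=
  sum_nonneg fun t _ => by
    have := sub_nonneg.2 hp1
    split_ifs <;> positivity

lemma sum_powerset_dvd_card_eq_probBinomialDvd {α : Type*} [DecidableEq α] (n : ℕ) (p : ℝ)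
    (S : Finset α) :
    ∑ A ∈ S.powerset with n ∣ #A, p ^ #A * (1 - p) ^ #(S \ A) = probBinomialDvd n #S p := by
  rw [sum_filter, sum_congr rfl fun A hA => by rw [card_sdiff_of_subset (mem_powerset.1 hA)],
    sum_powerset_apply_card (fun t => if n ∣ t then p ^ t * (1 - p) ^ (#S - t) else 0)]
  simp only [probBinomialDvd, nsmul_eq_mul, mul_ite, mul_zero, mul_assoc]

section RandomSequence

variable {α ι : Type*} [DecidableEq α]

def indicatorSeq (n : ℕ) (T : ι → Finset α) (j : α) : ι → ZMod n :=
  fun i => if j ∈ T i then 1 else 0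

lemma sum_indicatorSeq_eq_zero_iff {n : ℕ} {T : ι → Finset α} {S : Finset α} :
    ∑ j ∈ S, indicatorSeq n T j = 0 ↔ ∀ i, n ∣ #(S ∩ T i) := by
  simp only [funext_iff, Finset.sum_apply, indicatorSeq, sum_boole, filter_mem_eq_inter,
    Pi.zero_apply, ZMod.natCast_eq_zero_iff]

variable [Fintype α] [Fintype ι] [DecidableEq ι]

/-- A random sequence is encoded by the supports `T i` of its coordinates; its probability is
`∏ i, bernoulliWeight p (T i)`. -/
noncomputable def bernoulliWeight (p : ℝ) (T : Finset α) : ℝ := p ^ #T * (1 - p) ^ #Tᶜ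

lemma sum_bernoulliWeight (p : ℝ) : ∑ T : Finset α, bernoulliWeight p T = 1 := by
  simp only [bernoulliWeight, card_compl, Fintype.sum_pow_mul_eq_add_pow, add_sub_cancel, one_pow]

lemma sum_inter_mul_bernoulliWeight (p : ℝ) (f : Finset α → ℝ) (S : Finset α) :
    ∑ T, f (S ∩ T) * bernoulliWeight p T =
      ∑ A ∈ S.powerset, f A * (p ^ #A * (1 - p) ^ #(S \ A)) := by
  rw [← sum_powerset_union_inter_mul_pow_mul_pow (add_sub_cancel p 1) f disjoint_compl_right,
    union_compl, powerset_univ]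
  simp only [bernoulliWeight, compl_eq_univ_sdiff]

lemma sum_prod_bernoulliWeight_filter_sum_indicatorSeq_eq_zero (n : ℕ) (p : ℝ) (S : Finset α) :
    ∑ T : ι → Finset α with ∑ j ∈ S, indicatorSeq n T j = 0,
        ∏ i, bernoulliWeight p (T i) =
      probBinomialDvd n #S p ^ Fintype.card ι := by
  have hcoord : ∑ T : Finset α, (if n ∣ #(S ∩ T) then bernoulliWeight p T else 0) =
      probBinomialDvd n #S p := by
    simpa only [ite_mul, one_mul, zero_mul, ← sum_filter,
      sum_powerset_dvd_card_eq_probBinomialDvd] using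
      sum_inter_mul_bernoulliWeight p (fun A => if n ∣ #A then 1 else 0) S
  simp only [sum_filter, sum_indicatorSeq_eq_zero_iff, ← Fintype.prod_ite_zero]
  rw [← Fintype.prod_sum (fun _ T => if n ∣ #(S ∩ T) then bernoulliWeight p T else 0), hcoord,
    prod_const, card_univ]

lemma one_le_choose_mul_probBinomialDvd_pow {n m : ℕ} {p : ℝ} (hp0 : 0 ≤ p) (hp1 : p ≤ 1)
    (H : ∀ X : α → ι → ZMod n, ∃ S : Finset α, #S = m ∧ ∑ j ∈ S, X j = 0) :
    1 ≤ (Fintype.card α).choose m * probBinomialDvd n m p ^ Fintype.card ι := by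
  have hw0 : ∀ T : Finset α, 0 ≤ bernoulliWeight p T := fun T => by
    have := sub_nonneg.2 hp1
    unfold bernoulliWeight
    positivity
  have hunion := one_le_sum_sum_filter_of_forall_exists_mem
    (μ := fun T : ι → Finset α => ∏ i, bernoulliWeight p (T i))
    (fun T => prod_nonneg fun i _ => hw0 (T i))
    (by rw [← Fintype.prod_sum (fun _ T => bernoulliWeight p T)]; simp [sum_bernoulliWeight])
    (I := powersetCard m (univ : Finset α)) (E := fun S T => ∑ j ∈ S, indicatorSeq n T j = 0)
    (fun T => by
      obtain ⟨S, hS, hzero⟩ := H (indicatorSeq n T)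
      exact ⟨S, mem_powersetCard.2 ⟨subset_univ S, hS⟩, hzero⟩)
  rwa [sum_congr rfl fun S hS => by
      rw [sum_prod_bernoulliWeight_filter_sum_indicatorSeq_eq_zero, (mem_powersetCard.1 hS).2],
    sum_const, card_powersetCard, card_univ, nsmul_eq_mul] at hunion

end RandomSequence

lemma Nat.choose_le_exp_mul_div_pow (N t : ℕ) :
    (N.choose t : ℝ) ≤ (Real.exp 1 * N / t) ^ t := by
  rcases t.eq_zero_or_pos with rfl | ht
  · simp
  have ht' : (0 : ℝ) < t := by exact_mod_cast ht
  calc (N.choose t : ℝ) ≤ (N : ℝ) ^ t / t.factorial := Nat.choose_le_pow_div t N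
    _ = (N / t : ℝ) ^ t * ((t : ℝ) ^ t / t.factorial) := by
      rw [div_pow]
      field_simp
    _ ≤ (N / t : ℝ) ^ t * Real.exp 1 ^ t := by
      rw [Real.exp_one_pow]
      gcongr
      exact Real.pow_div_factorial_le_exp _ ht'.le t
    _ = (Real.exp 1 * N / t) ^ t := by ring

lemma Nat.choose_mul_le_exp_mul_pow_of_dvd {k n t : ℕ} (hnt : n ∣ t) :
    ((k * n).choose t : ℝ) ≤ (Real.exp 1 * k) ^ t := by
  rcases t.eq_zero_or_pos with rfl | ht
  · simp
  have hnt' : (n : ℝ) ≤ t := by exact_mod_cast Nat.le_of_dvd ht hnt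
  calc ((k * n).choose t : ℝ) ≤ (Real.exp 1 * (k * n : ℕ) / t) ^ t :=
        Nat.choose_le_exp_mul_div_pow _ _
    _ ≤ (Real.exp 1 * k) ^ t := by
      gcongr
      rw [div_le_iff₀ (by exact_mod_cast ht), Nat.cast_mul, ← mul_assoc]
      gcongr

lemma card_filter_dvd_range_mul_le (k n : ℕ) :
    #{t ∈ range (k * n + 1) | n ∣ t} ≤ k + 1 := by
  calc #{t ∈ range (k * n + 1) | n ∣ t}
        ≤ #(insert 0 {t ∈ range (k * n).succ | t ≠ 0 ∧ n ∣ t}) := by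
        refine card_le_card fun t ht => ?_
        rw [mem_insert, mem_filter]
        rw [mem_filter] at ht
        tauto
    _ ≤ (k * n) / n + 1 := by
        rw [← Nat.card_multiples']
        exact card_insert_le _ _
    _ ≤ k + 1 := by
        gcongr
        exact Nat.div_le_of_le_mul (Nat.mul_comm k n).le

lemma probBinomialDvd_mul_le {k n : ℕ} {p : ℝ} (hp : 0 ≤ p)
    (hpk : Real.exp 1 * k * p ≤ 1 - p) :
    probBinomialDvd n (k * n) p ≤ (k + 1) * (1 - p) ^ (k * n) := by
  have hq : 0 ≤ 1 - p := le_trans (by positivity) hpk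
  have hterm : ∀ t ∈ range (k * n + 1),
      (if n ∣ t then ((k * n).choose t : ℝ) * p ^ t * (1 - p) ^ (k * n - t) else 0) ≤
        if n ∣ t then (1 - p) ^ (k * n) else 0 := by
    intro t ht
    split_ifs with hnt
    · calc ((k * n).choose t : ℝ) * p ^ t * (1 - p) ^ (k * n - t)
          ≤ (Real.exp 1 * k) ^ t * p ^ t * (1 - p) ^ (k * n - t) := by
            gcongr
            exact Nat.choose_mul_le_exp_mul_pow_of_dvd hnt
        _ = (Real.exp 1 * k * p) ^ t * (1 - p) ^ (k * n - t) := by ring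
        _ ≤ (1 - p) ^ t * (1 - p) ^ (k * n - t) := by gcongr
        _ = (1 - p) ^ (k * n) := by
            rw [← pow_add, Nat.add_sub_cancel' (Nat.lt_succ_iff.1 (mem_range.1 ht))]
    · rfl
  calc probBinomialDvd n (k * n) p
      ≤ ∑ t ∈ range (k * n + 1), if n ∣ t then (1 - p) ^ (k * n) else 0 := sum_le_sum hterm
    _ = #{t ∈ range (k * n + 1) | n ∣ t} * (1 - p) ^ (k * n) := by
      rw [← sum_filter, sum_const, nsmul_eq_mul]
    _ ≤ (k + 1) * (1 - p) ^ (k * n) := by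
      gcongr
      exact_mod_cast card_filter_dvd_range_mul_le k n

lemma Nat.choose_lt_pow_of_le_mul {N m : ℕ} (hm : m ≠ 0) {a : ℝ} (ha : 0 < a)
    (hN : (N : ℝ) ≤ m / 4 * a) : (N.choose m : ℝ) < a ^ m := by
  have hm' : (0 : ℝ) < m := by positivity
  calc (N.choose m : ℝ) ≤ (Real.exp 1 * N / m) ^ m := Nat.choose_le_exp_mul_div_pow N m
    _ ≤ (Real.exp 1 / 4 * a) ^ m := by
      gcongr
      rw [div_le_iff₀ hm']
      calc Real.exp 1 * N ≤ Real.exp 1 * (m / 4 * a) := by gcongr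
        _ = Real.exp 1 / 4 * a * m := by ring
    _ < a ^ m := by
      have he : Real.exp 1 / 4 < 1 := by linarith [Real.exp_one_lt_d9]
      gcongr
      exact mul_lt_of_lt_one_left ha he

lemma one_add_one_div_mul_rpow_pow (m : ℕ) (hm : m ≠ 0) {x c : ℝ} (hx : 0 < x) (hc : 0 < c) :
    ((1 + 1 / x) * c ^ (-1 / (m : ℝ))) ^ m = (c * (1 - 1 / (x + 1)) ^ m)⁻¹ := by
  have hc_pow : (c ^ (-1 / (m : ℝ))) ^ m = c⁻¹ := by
    rw [← Real.rpow_natCast, ← Real.rpow_mul hc.le, div_mul_cancel₀ _ (by positivity),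
      Real.rpow_neg_one]
  have hx_pow : (1 + 1 / x) = (1 - 1 / (x + 1))⁻¹ := by
    rw [one_sub_div (by positivity), add_sub_cancel_right, inv_div, one_add_div hx.ne']
  rw [mul_pow, hc_pow, hx_pow, inv_pow, mul_inv, mul_comm]

theorem egz_lower_bound_general_explicit_general (k n r : ℕ) (hk : 3 ≤ k) (hn : 1 ≤ n) :
    ∃ X : Fin (⌊(k * n / 4 : ℝ) *
          ((1 + 1 / (Real.exp 1 * k)) * ((k : ℝ) + 1) ^ (-(1 : ℝ) / (k * n))) ^ r⌋₊) →
        (Fin r → ZMod n),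
      ∀ S : Finset (Fin (⌊(k * n / 4 : ℝ) *
          ((1 + 1 / (Real.exp 1 * k)) * ((k : ℝ) + 1) ^ (-(1 : ℝ) / (k * n))) ^ r⌋₊)),
        S.card = k * n → ∑ j ∈ S, X j ≠ 0 := by
  set A : ℝ := (1 + 1 / (Real.exp 1 * k)) * ((k : ℝ) + 1) ^ (-(1 : ℝ) / (k * n))
  set N := ⌊(k * n / 4 : ℝ) * A ^ r⌋₊
  by_contra! H
  have hkn : k * n ≠ 0 := by positivity
  have hek : 0 < Real.exp 1 * k := by positivity
  set p : ℝ := 1 / (Real.exp 1 * k + 1)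
  have hp1 : p ≤ 1 := div_le_one_of_le₀ (by linarith) (by positivity)
  have hpk : Real.exp 1 * k * p = 1 - p := by
    simp only [p]
    field_simp
    ring
  have hq : 0 < 1 - p := hpk ▸ by positivity
  have hA : A ^ (k * n) = ((k + 1) * (1 - p) ^ (k * n))⁻¹ := by
    have h := one_add_one_div_mul_rpow_pow (k * n) hkn hek (by positivity : (0 : ℝ) < k + 1)
    push_cast at h
    exact h
  have hunion : 1 ≤ (N.choose (k * n) : ℝ) * probBinomialDvd n (k * n) p ^ r := by
    simpa using one_le_choose_mul_probBinomialDvd_pow (by positivity) hp1 H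
  have hchoose : (N.choose (k * n) : ℝ) < (A ^ r) ^ (k * n) :=
    Nat.choose_lt_pow_of_le_mul hkn (by positivity) (by simpa using Nat.floor_le (by positivity))
  have hprob : probBinomialDvd n (k * n) p ≤ (k + 1) * (1 - p) ^ (k * n) :=
    probBinomialDvd_mul_le (by positivity) hpk.le
  have hprob0 := probBinomialDvd_nonneg n (k * n) (by positivity) hp1
  have hlt : (N.choose (k * n) : ℝ) * probBinomialDvd n (k * n) p ^ r < 1 :=
    calc _ ≤ (N.choose (k * n) : ℝ) * ((k + 1) * (1 - p) ^ (k * n)) ^ r := by gcongr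
      _ < (A ^ r) ^ (k * n) * ((k + 1) * (1 - p) ^ (k * n)) ^ r := by gcongr
      _ = 1 := by
        rw [← pow_mul, mul_comm r, pow_mul, hA, ← mul_pow, inv_mul_cancel₀ (by positivity),
          one_pow]
  exact (hunion.trans_lt hlt).false

theorem egz_lower_bound_general_explicit (k n r : ℕ) (hk : 3 ≤ k) (hn : 1 ≤ n) (hr : 1 ≤ r) :
    ∃ X : Fin (⌊(k * n / 4 : ℝ) *
          ((1 + 1 / (Real.exp 1 * k)) * ((k : ℝ) + 1) ^ (-(1 : ℝ) / (k * n))) ^ r⌋₊) →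
        (Fin r → ZMod n),
      ∀ S : Finset (Fin (⌊(k * n / 4 : ℝ) *
          ((1 + 1 / (Real.exp 1 * k)) * ((k : ℝ) + 1) ^ (-(1 : ℝ) / (k * n))) ^ r⌋₊)),
        S.card = k * n → ∑ j ∈ S, X j ≠ 0 :=
  egz_lower_bound_general_explicit_general k n r hk hn
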